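/- Fix n ∈ ℕ. Then K_n(A) := ∑_{τ ⪯ σ(n)} φ_τ(A) φ_τ(A)^* satisfies K_n(A) ⪰ I_k; in particular K_n(A) is positive definite and invertible, so Λ_n(A) := K_n(A)^{−1} is well defined. Moreover: (i) for every n-admissible family c for A, Λ_n(A) ⪯ M(c); and (ii) there exists an n-admissible family c for A with M(c) = Λ_n(A). Hence Λ_n(A) is the minimum of {M(c) : c is n-admissible for A} in the Loewner order. -/
import Mathlib


open scoped BigOperators ComplexOrder

/-- `L^σ = L_{σ_1} ⋯ L_{σ_n}` for a word `σ` over the alphabet of `d` generators. -/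
noncomputable def Lword {d : ℕ} {H : Type*} [NormedAddCommGroup H] [InnerProductSpace ℂ H]
    (L : Fin d → H →L[ℂ] H) (σ : List (Fin d)) : H →L[ℂ] H :=
  (σ.map L).prod

/-- Evaluation of a noncommutative polynomial at the tuple `L` of operators. -/
noncomputable def evalL {d : ℕ} {H : Type*} [NormedAddCommGroup H] [InnerProductSpace ℂ H]
    (L : Fin d → H →L[ℂ] H) : FreeAlgebra ℂ (Fin d) →ₐ[ℂ] (H →L[ℂ] H) :=
  FreeAlgebra.lift ℂ L

/-- Evaluation of a noncommutative polynomial at a `d`-tuple `A` of `k×k` matrices. -/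
noncomputable def evalA {d k : ℕ} (A : Fin d → Matrix (Fin k) (Fin k) ℂ) :
    FreeAlgebra ℂ (Fin d) →ₐ[ℂ] Matrix (Fin k) (Fin k) ℂ :=
  FreeAlgebra.lift ℂ A

/-- `A^τ = A_{τ_1} ⋯ A_{τ_m}` for a word `τ`. -/
noncomputable def Aword {d k : ℕ} (A : Fin d → Matrix (Fin k) (Fin k) ℂ)
    (τ : List (Fin d)) : Matrix (Fin k) (Fin k) ℂ :=
  (τ.map A).prod

/-- A family `c : F_d^+ → M_k(ℂ)` is `n`-admissible for `A` if `c_τ = 0` unless `τ ⪯ σ(n)`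
(equivalently `|τ| ≤ n`), and `∑_{τ ⪯ σ(n)} A^τ c_τ = I_k`.  Words of length `l` are
enumerated as `List.ofFn f` for `f : Fin l → Fin d`. -/
def Admissible {d k : ℕ} (A : Fin d → Matrix (Fin k) (Fin k) ℂ) (n : ℕ)
    (c : List (Fin d) → Matrix (Fin k) (Fin k) ℂ) : Prop :=
  (∀ τ : List (Fin d), n < τ.length → c τ = 0) ∧
  (∑ l ∈ Finset.range (n + 1), ∑ f : Fin l → Fin d,
      Aword A (List.ofFn f) * c (List.ofFn f)) = 1

/-- `M(c) := ∑_{σ,τ ⪯ σ(n)} μ((L^σ)^* L^τ) c_σ^* c_τ`. -/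
noncomputable def Mval {d k : ℕ} {H : Type*} [NormedAddCommGroup H]
    [InnerProductSpace ℂ H] [CompleteSpace H] (L : Fin d → H →L[ℂ] H)
    (μ : (H →L[ℂ] H) →ₗ[ℂ] ℂ) (n : ℕ)
    (c : List (Fin d) → Matrix (Fin k) (Fin k) ℂ) : Matrix (Fin k) (Fin k) ℂ :=
  ∑ l ∈ Finset.range (n + 1), ∑ f : Fin l → Fin d,
    ∑ l' ∈ Finset.range (n + 1), ∑ g : Fin l' → Fin d,
      μ (star (Lword L (List.ofFn f)) * Lword L (List.ofFn g)) •
        (star (c (List.ofFn f)) * c (List.ofFn g))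

/-- The Christoffel–Darboux kernel `K_n(A) := ∑_{τ ⪯ σ(n)} φ_τ(A) φ_τ(A)^*`. -/
noncomputable def Kmat {d k : ℕ} (φ : List (Fin d) → FreeAlgebra ℂ (Fin d))
    (A : Fin d → Matrix (Fin k) (Fin k) ℂ) (n : ℕ) : Matrix (Fin k) (Fin k) ℂ :=
  ∑ l ∈ Finset.range (n + 1), ∑ f : Fin l → Fin d,
    evalA A (φ (List.ofFn f)) * star (evalA A (φ (List.ofFn f)))


section ChristoffelAux

variable {d : ℕ}

/-- Index type for words of length at most `n`. -/
abbrev WIdx (d n : ℕ) := Σ l : Fin (n+1), (Fin (l : ℕ) → Fin d)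

/-- The word corresponding to an index. -/
def wrd {d n : ℕ} (i : WIdx d n) : List (Fin d) := List.ofFn i.2

lemma sum_words {M : Type*} [AddCommMonoid M] (n : ℕ) (F : List (Fin d) → M) :
    ∑ l ∈ Finset.range (n+1), ∑ f : Fin l → Fin d, F (List.ofFn f)
      = ∑ i : WIdx d n, F (wrd i) := by
  rw [← Fin.sum_univ_eq_sum_range (fun l => ∑ f : Fin l → Fin d, F (List.ofFn f)) (n+1)]
  rw [← Finset.univ_sigma_univ, Finset.sum_sigma]
  rfl

lemma wrd_length {n : ℕ} (i : WIdx d n) : (wrd i).length ≤ n := by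
  simp [wrd]; omega

lemma wrd_injective {n : ℕ} : Function.Injective (wrd (d := d) (n := n)) := by
  rintro ⟨l, f⟩ ⟨l', f'⟩ h
  have hl : (l : ℕ) = (l' : ℕ) := by
    have := congrArg List.length h
    simpa [wrd] using this
  have hl2 : l = l' := Fin.ext hl
  subst hl2
  simpa [wrd, List.ofFn_injective.eq_iff] using h

lemma range_wrd {n : ℕ} :
    Set.range (wrd (d := d) (n := n)) = {τ : List (Fin d) | τ.length ≤ n} := by
  ext τ
  constructor
  · rintro ⟨i, rfl⟩; exact wrd_length i
  · intro h
    simp only [Set.mem_setOf_eq] at h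
    exact ⟨⟨⟨τ.length, by omega⟩, τ.get⟩, by simp [wrd]⟩

/-- The monomial `Z^τ`. -/
def Zw (τ : List (Fin d)) : FreeAlgebra ℂ (Fin d) := (τ.map (FreeAlgebra.ι ℂ)).prod

lemma lift_Zw {S : Type*} [Semiring S] [Algebra ℂ S] (f : Fin d → S) (τ : List (Fin d)) :
    FreeAlgebra.lift ℂ f (Zw τ) = (τ.map f).prod := by
  unfold Zw
  rw [map_list_prod]
  congr 1
  rw [List.map_map]
  congr 1
  funext j
  simp

lemma posSemidef_sum {ι' k : Type*} [Fintype k] [DecidableEq k] (s : Finset ι')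
    (F : ι' → Matrix k k ℂ) (h : ∀ i ∈ s, (F i).PosSemidef) : (∑ i ∈ s, F i).PosSemidef := by
  classical
  exact Finset.sum_induction F _ (fun a b ha hb => ha.add hb) Matrix.PosSemidef.zero h

open Matrix in
lemma key_identity {ιt : Type*} [Fintype ιt] {k : ℕ} (P B : ιt → Matrix (Fin k) (Fin k) ℂ)
    (K : Matrix (Fin k) (Fin k) ℂ) (hK : K = ∑ j, P j * (P j)ᴴ) (hB : ∑ j, P j * B j = 1)
    (hKu : IsUnit K.det) (hKh : K⁻¹.IsHermitian) :
    (∑ j, (B j)ᴴ * (B j)) - K⁻¹ =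
      ∑ j, (B j - (P j)ᴴ * K⁻¹)ᴴ * (B j - (P j)ᴴ * K⁻¹) := by
  have h1 : ∀ j, (B j - (P j)ᴴ * K⁻¹)ᴴ * (B j - (P j)ᴴ * K⁻¹)
      = (B j)ᴴ * B j - ((B j)ᴴ * (P j)ᴴ) * K⁻¹ - K⁻¹ * (P j * B j)
        + K⁻¹ * (P j * (P j)ᴴ) * K⁻¹ := by
    intro j
    simp only [conjTranspose_sub, conjTranspose_mul, conjTranspose_conjTranspose, hKh.eq]
    noncomm_ring
  rw [Finset.sum_congr rfl (fun j _ => h1 j)]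
  have h2 : ∑ j, (B j)ᴴ * (P j)ᴴ = 1 := by
    have := congrArg conjTranspose hB
    simpa [conjTranspose_sum, conjTranspose_mul] using this
  simp only [Finset.sum_add_distrib, Finset.sum_sub_distrib, ← Finset.sum_mul,
    ← Finset.mul_sum, h2, hB, ← hK, one_mul, mul_one]
  rw [Matrix.nonsing_inv_mul K hKu, one_mul]
  abel

open Matrix in
lemma sum_rearrange {ιt : Type*} [Fintype ιt] {k : ℕ} (u : ιt → ιt → ℂ)
    (c : ιt → Matrix (Fin k) (Fin k) ℂ) :
    ∑ i, ∑ i', (∑ j, star (u i j) * u i' j) • ((c i)ᴴ * c i')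
      = ∑ j, (∑ i, u i j • c i)ᴴ * (∑ i', u i' j • c i') := by
  have hR : ∀ j : ιt, (∑ i, u i j • c i)ᴴ * (∑ i', u i' j • c i')
      = ∑ i, ∑ i', (star (u i j) * u i' j) • ((c i)ᴴ * c i') := by
    intro j
    rw [conjTranspose_sum, Finset.sum_mul_sum]
    refine Finset.sum_congr rfl fun i _ => Finset.sum_congr rfl fun i' _ => ?_
    rw [conjTranspose_smul, smul_mul_smul_comm]
  calc ∑ i, ∑ i', (∑ j, star (u i j) * u i' j) • ((c i)ᴴ * c i')
      = ∑ i, ∑ i', ∑ j, (star (u i j) * u i' j) • ((c i)ᴴ * c i') := by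
        refine Finset.sum_congr rfl fun i _ => Finset.sum_congr rfl fun i' _ => ?_
        rw [Finset.sum_smul]
    _ = ∑ i, ∑ j, ∑ i', (star (u i j) * u i' j) • ((c i)ᴴ * c i') :=
        Finset.sum_congr rfl fun i _ => Finset.sum_comm
    _ = ∑ j, ∑ i, ∑ i', (star (u i j) * u i' j) • ((c i)ᴴ * c i') := Finset.sum_comm
    _ = ∑ j, (∑ i, u i j • c i)ᴴ * (∑ i', u i' j • c i') :=
        Finset.sum_congr rfl fun j _ => (hR j).symm

lemma mu_gram {ιt : Type*} [Fintype ιt] [DecidableEq ιt] {H : Type*} [NormedAddCommGroup H]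
    [InnerProductSpace ℂ H] [CompleteSpace H]
    (μ : (H →L[ℂ] H) →ₗ[ℂ] ℂ) (φL : ιt → (H →L[ℂ] H))
    (horth' : ∀ j j' : ιt, μ (star (φL j) * φL j') = if j' = j then 1 else 0)
    (x y : ιt → ℂ) :
    μ (star (∑ j, x j • φL j) * (∑ j', y j' • φL j')) = ∑ j, star (x j) * y j := by
  rw [star_sum, Finset.sum_mul_sum]
  have h : ∀ j j' : ιt, star (x j • φL j) * (y j' • φL j')
      = (star (x j) * y j') • (star (φL j) * φL j') := by
    intro j j'
    rw [star_smul, smul_mul_smul_comm]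
  simp only [h, map_sum, map_smul, horth', smul_eq_mul, mul_ite, mul_one, mul_zero]
  simp [Finset.sum_ite_eq' Finset.univ]

end ChristoffelAux

open Matrix

set_option maxHeartbeats 1000000 in
/-- `K_n(A) := ∑_{τ ⪯ σ(n)} φ_τ(A) φ_τ(A)^*` satisfies `K_n(A) ⪰ I_k`, is positive
definite and invertible (so `Λ_n(A) := K_n(A)⁻¹` is well defined); moreover `Λ_n(A)` is the
Loewner minimum of `{M(c) : c n-admissible for A}`: `Λ_n(A) ⪯ M(c)` for every `n`-admissible
`c`, and the value `Λ_n(A)` is attained by some `n`-admissible family. -/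
theorem christoffel_approximate_min {d k : ℕ} (hd : 1 ≤ d) (hk : 1 ≤ k)
    {H : Type*} [NormedAddCommGroup H] [InnerProductSpace ℂ H] [CompleteSpace H]
    (L : Fin d → H →L[ℂ] H)
    (hL : ∀ i j : Fin d, star (L i) * L j = if i = j then (1 : H →L[ℂ] H) else 0)
    (μ : (H →L[ℂ] H) →ₗ[ℂ] ℂ)
    (hμ : ∀ a ∈ Algebra.adjoin ℂ (Set.range L), 0 ≤ μ (star a * a))
    (φ : List (Fin d) → FreeAlgebra ℂ (Fin d)) (hφ0 : φ [] = 1)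
    (horth : ∀ σ τ : List (Fin d),
      μ (star (evalL L (φ τ)) * evalL L (φ σ)) = if σ = τ then 1 else 0)
    (hspan : ∀ n : ℕ,
      Submodule.span ℂ (φ '' {τ : List (Fin d) | τ.length ≤ n}) =
        Submodule.span ℂ
          ((fun τ : List (Fin d) => (τ.map (FreeAlgebra.ι ℂ)).prod) ''
            {τ : List (Fin d) | τ.length ≤ n}))
    (A : Fin d → Matrix (Fin k) (Fin k) ℂ) (n : ℕ) :
    (Kmat φ A n - 1).PosSemidef ∧
    (Kmat φ A n).PosDef ∧
    IsUnit (Kmat φ A n) ∧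
    (∀ c : List (Fin d) → Matrix (Fin k) (Fin k) ℂ, Admissible A n c →
      (Mval L μ n c - (Kmat φ A n)⁻¹).PosSemidef) ∧
    (∃ c : List (Fin d) → Matrix (Fin k) (Fin k) ℂ, Admissible A n c ∧
      Mval L μ n c = (Kmat φ A n)⁻¹) := by

  classical
  have hKsum : Kmat φ A n = ∑ j : WIdx d n, evalA A (φ (wrd j)) * star (evalA A (φ (wrd j))) := by
    unfold Kmat
    exact sum_words n (fun τ => evalA A (φ τ) * star (evalA A (φ τ)))
  -- the empty-word index
  let i0 : WIdx d n := ⟨⟨0, Nat.succ_pos n⟩, Fin.elim0⟩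
  have hwrd0 : wrd i0 = [] := by
    simp [wrd, i0]
  have hP0 : evalA A (φ (wrd i0)) * star (evalA A (φ (wrd i0))) = 1 := by
    rw [hwrd0, hφ0]
    simp
  have hK1 : (Kmat φ A n - 1).PosSemidef := by
    rw [hKsum, ← hP0, ← Finset.add_sum_erase Finset.univ _ (Finset.mem_univ i0),
      add_sub_cancel_left]
    exact posSemidef_sum _ _ fun i _ => Matrix.posSemidef_self_mul_conjTranspose _
  have hKpd : (Kmat φ A n).PosDef := by
    have h : Kmat φ A n = 1 + (Kmat φ A n - 1) := by abel
    rw [h]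
    exact Matrix.PosDef.one.add_posSemidef hK1
  have hKu : IsUnit (Kmat φ A n) := hKpd.isUnit
  have hKdet : IsUnit (Kmat φ A n).det := (Matrix.isUnit_iff_isUnit_det _).mp hKu
  have hKinvh : ((Kmat φ A n)⁻¹).IsHermitian := hKpd.inv.1
  -- coefficient machinery
  have hspan' : Submodule.span ℂ (Set.range fun j : WIdx d n => φ (wrd j))
      = Submodule.span ℂ (Set.range fun i : WIdx d n => Zw (wrd i)) := by
    have h := hspan n
    rw [← range_wrd (d := d) (n := n), ← Set.range_comp, ← Set.range_comp] at h
    exact h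
  have hu0 : ∀ i : WIdx d n, ∃ uu : WIdx d n → ℂ, ∑ j, uu j • φ (wrd j) = Zw (wrd i) := by
    intro i
    refine (Submodule.mem_span_range_iff_exists_fun ℂ).mp ?_
    rw [hspan']
    exact Submodule.subset_span ⟨i, rfl⟩
  choose u hu using hu0
  have hv0 : ∀ j : WIdx d n, ∃ vv : WIdx d n → ℂ, ∑ i, vv i • Zw (wrd i) = φ (wrd j) := by
    intro j
    refine (Submodule.mem_span_range_iff_exists_fun ℂ).mp ?_
    rw [← hspan']
    exact Submodule.subset_span ⟨j, rfl⟩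
  choose v hv using hv0
  have horth' : ∀ j j' : WIdx d n,
      μ (star (evalL L (φ (wrd j))) * evalL L (φ (wrd j'))) = if j' = j then 1 else 0 := by
    intro j j'
    rw [horth]
    simp [wrd_injective.eq_iff]
  have hLword : ∀ i : WIdx d n, Lword L (wrd i) = ∑ j, u i j • evalL L (φ (wrd j)) := by
    intro i
    have h1 : Lword L (wrd i) = evalL L (Zw (wrd i)) := by
      rw [evalL, lift_Zw]
      rfl
    rw [h1, ← hu i, map_sum]
    simp
  have hgram : ∀ i i' : WIdx d n, μ (star (Lword L (wrd i)) * Lword L (wrd i'))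
      = ∑ j, star (u i j) * u i' j := by
    intro i i'
    rw [hLword i, hLword i']
    exact mu_gram μ _ horth' (u i) (u i')
  -- B c j := ∑ i, u i j • c (wrd i)
  have hMval : ∀ c : List (Fin d) → Matrix (Fin k) (Fin k) ℂ,
      Mval L μ n c = ∑ j : WIdx d n,
        (∑ i, u i j • c (wrd i))ᴴ * (∑ i', u i' j • c (wrd i')) := by
    intro c
    have h1 : Mval L μ n c = ∑ i : WIdx d n, ∑ i' : WIdx d n,
        μ (star (Lword L (wrd i)) * Lword L (wrd i')) • (star (c (wrd i)) * c (wrd i')) := by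
      unfold Mval
      rw [sum_words n (fun τ => ∑ l' ∈ Finset.range (n + 1), ∑ g : Fin l' → Fin d,
        μ (star (Lword L τ) * Lword L (List.ofFn g)) • (star (c τ) * c (List.ofFn g)))]
      exact Finset.sum_congr rfl fun i _ => sum_words n
        (fun τ' => μ (star (Lword L (wrd i)) * Lword L τ') • (star (c (wrd i)) * c τ'))
    rw [h1]
    simp only [hgram, Matrix.star_eq_conjTranspose]
    exact sum_rearrange u (fun i => c (wrd i))
  have hadm1 : ∀ c : List (Fin d) → Matrix (Fin k) (Fin k) ℂ, Admissible A n c →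
      ∑ j : WIdx d n, evalA A (φ (wrd j)) * (∑ i, u i j • c (wrd i)) = 1 := by
    intro c hc
    have h1 : ∑ i : WIdx d n, Aword A (wrd i) * c (wrd i) = 1 := by
      rw [← sum_words n (fun τ => Aword A τ * c τ)]
      exact hc.2
    calc ∑ j : WIdx d n, evalA A (φ (wrd j)) * (∑ i, u i j • c (wrd i))
        = ∑ j : WIdx d n, ∑ i, u i j • (evalA A (φ (wrd j)) * c (wrd i)) := by
          refine Finset.sum_congr rfl fun j _ => ?_
          rw [Finset.mul_sum]
          exact Finset.sum_congr rfl fun i _ => mul_smul_comm _ _ _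
      _ = ∑ i : WIdx d n, ∑ j, u i j • (evalA A (φ (wrd j)) * c (wrd i)) := Finset.sum_comm
      _ = ∑ i : WIdx d n, (∑ j, u i j • evalA A (φ (wrd j))) * c (wrd i) := by
          refine Finset.sum_congr rfl fun i _ => ?_
          rw [Finset.sum_mul]
          exact Finset.sum_congr rfl fun j _ => by rw [smul_mul_assoc]
      _ = ∑ i : WIdx d n, Aword A (wrd i) * c (wrd i) := by
          refine Finset.sum_congr rfl fun i _ => ?_
          congr 1
          have : ∑ j, u i j • evalA A (φ (wrd j)) = evalA A (∑ j, u i j • φ (wrd j)) := by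
            rw [map_sum]; simp
          rw [this, hu i, evalA, lift_Zw]
          rfl
      _ = 1 := h1
  have hKsum' : Kmat φ A n = ∑ j : WIdx d n,
      evalA A (φ (wrd j)) * (evalA A (φ (wrd j)))ᴴ := by
    simpa [Matrix.star_eq_conjTranspose] using hKsum
  have hAw : ∀ τ : List (Fin d), evalA A (Zw τ) = Aword A τ := by
    intro τ
    rw [evalA, lift_Zw]
    rfl
  refine ⟨hK1, hKpd, hKu, ?_, ?_⟩
  · intro c hc
    have hid := key_identity (fun j : WIdx d n => evalA A (φ (wrd j)))
      (fun j : WIdx d n => ∑ i, u i j • c (wrd i)) (Kmat φ A n) hKsum' (hadm1 c hc) hKdet hKinvh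
    rw [hMval c, hid]
    exact posSemidef_sum _ _ fun j _ => Matrix.posSemidef_conjTranspose_mul_self _
  · -- attainment
    have hLI : ∀ a : WIdx d n → ℂ, (∑ j, a j • φ (wrd j)) = 0 → ∀ j, a j = 0 := by
      intro a ha j
      have h1 : (∑ j' : WIdx d n, a j' • evalL L (φ (wrd j'))) = 0 := by
        have h := congrArg (evalL L) ha
        simpa [map_sum] using h
      have h3 : μ (star (evalL L (φ (wrd j))) *
          (∑ j' : WIdx d n, a j' • evalL L (φ (wrd j')))) = a j := by
        simp only [Finset.mul_sum, mul_smul_comm, map_sum, LinearMap.map_smul, smul_eq_mul]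
        simp only [horth', mul_ite, mul_one, mul_zero]
        simp
      rw [h1, mul_zero, map_zero] at h3
      exact h3.symm
    have hvu : ∀ j j' : WIdx d n, ∑ i, v j i * u i j' = (if j' = j then 1 else 0) := by
      intro j j'
      have hsum : ∑ j' : WIdx d n,
          ((∑ i, v j i * u i j') - (if j' = j then 1 else 0)) • φ (wrd j') = 0 := by
        have e1 : ∑ j' : WIdx d n, (∑ i, v j i * u i j') • φ (wrd j') = φ (wrd j) := by
          calc ∑ j' : WIdx d n, (∑ i, v j i * u i j') • φ (wrd j')
              = ∑ j' : WIdx d n, ∑ i, (v j i * u i j') • φ (wrd j') := by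
                refine Finset.sum_congr rfl fun j' _ => ?_
                rw [Finset.sum_smul]
            _ = ∑ i : WIdx d n, ∑ j', (v j i * u i j') • φ (wrd j') := Finset.sum_comm
            _ = ∑ i : WIdx d n, v j i • Zw (wrd i) := by
                refine Finset.sum_congr rfl fun i _ => ?_
                rw [← hu i, Finset.smul_sum]
                exact Finset.sum_congr rfl fun j' _ => mul_smul _ _ _
            _ = φ (wrd j) := hv j
        have e2 : ∑ j' : WIdx d n, (if j' = j then (1:ℂ) else 0) • φ (wrd j') = φ (wrd j) := by
          simp [ite_smul]
        simp only [sub_smul, Finset.sum_sub_distrib, e1, e2, sub_self]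
      exact sub_eq_zero.mp (hLI _ hsum j')
    set X : WIdx d n → Matrix (Fin k) (Fin k) ℂ :=
      fun j => (evalA A (φ (wrd j)))ᴴ * (Kmat φ A n)⁻¹ with hX
    set c' : WIdx d n → Matrix (Fin k) (Fin k) ℂ := fun i => ∑ j, v j i • X j with hc'
    set c : List (Fin d) → Matrix (Fin k) (Fin k) ℂ :=
      fun τ => ∑ i : WIdx d n, (if wrd i = τ then c' i else 0) with hcdef
    have hcw : ∀ i : WIdx d n, c (wrd i) = c' i := by
      intro i
      have h : ∀ i' : WIdx d n, (if wrd i' = wrd i then c' i' else 0)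
          = (if i' = i then c' i' else 0) := by
        intro i'
        simp [wrd_injective.eq_iff]
      rw [hcdef]
      simp only [h]
      simp
    have hBX : ∀ j' : WIdx d n, (∑ i, u i j' • c (wrd i)) = X j' := by
      intro j'
      calc ∑ i, u i j' • c (wrd i) = ∑ i, ∑ j, (v j i * u i j') • X j := by
            refine Finset.sum_congr rfl fun i _ => ?_
            rw [hcw i]
            simp only [hc']
            rw [Finset.smul_sum]
            refine Finset.sum_congr rfl fun j _ => ?_
            rw [smul_smul, mul_comm]
        _ = ∑ j, ∑ i, (v j i * u i j') • X j := Finset.sum_comm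
        _ = ∑ j, (∑ i, v j i * u i j') • X j := by
            refine Finset.sum_congr rfl fun j _ => ?_
            rw [Finset.sum_smul]
        _ = ∑ j, (if j' = j then (1:ℂ) else 0) • X j := by
            simp only [hvu]
        _ = X j' := by
            simp [ite_smul]
    have hadm : Admissible A n c := by
      constructor
      · intro τ hτ
        refine Finset.sum_eq_zero fun i _ => ?_
        rw [if_neg]
        intro h
        have h2 := wrd_length i
        rw [h] at h2
        omega
      · rw [sum_words n (fun τ => Aword A τ * c τ)]
        calc ∑ i : WIdx d n, Aword A (wrd i) * c (wrd i)
            = ∑ i : WIdx d n, ∑ j, v j i • (evalA A (Zw (wrd i)) * X j) := by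
              refine Finset.sum_congr rfl fun i _ => ?_
              rw [hcw i]
              simp only [hc']
              rw [← hAw, Finset.mul_sum]
              exact Finset.sum_congr rfl fun j _ => mul_smul_comm _ _ _
          _ = ∑ j, ∑ i, v j i • (evalA A (Zw (wrd i)) * X j) := Finset.sum_comm
          _ = ∑ j, (∑ i, v j i • evalA A (Zw (wrd i))) * X j := by
              refine Finset.sum_congr rfl fun j _ => ?_
              rw [Finset.sum_mul]
              exact Finset.sum_congr rfl fun i _ => by rw [smul_mul_assoc]
          _ = ∑ j, evalA A (φ (wrd j)) * X j := by
              refine Finset.sum_congr rfl fun j _ => ?_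
              congr 1
              rw [← hv j, map_sum]
              simp
          _ = (∑ j : WIdx d n, evalA A (φ (wrd j)) * (evalA A (φ (wrd j)))ᴴ)
                * (Kmat φ A n)⁻¹ := by
              rw [Finset.sum_mul]
              refine Finset.sum_congr rfl fun j _ => ?_
              simp only [hX]
              rw [mul_assoc]
          _ = 1 := by
              rw [← hKsum', Matrix.mul_nonsing_inv _ hKdet]
    refine ⟨c, hadm, ?_⟩
    rw [hMval c]
    simp only [hBX]
    calc ∑ j : WIdx d n, (X j)ᴴ * X j
        = ∑ j : WIdx d n, (Kmat φ A n)⁻¹ *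
            (evalA A (φ (wrd j)) * (evalA A (φ (wrd j)))ᴴ) * (Kmat φ A n)⁻¹ := by
          refine Finset.sum_congr rfl fun j _ => ?_
          simp only [hX]
          rw [Matrix.conjTranspose_mul, hKinvh.eq, Matrix.conjTranspose_conjTranspose]
          noncomm_ring
      _ = (Kmat φ A n)⁻¹ * (∑ j : WIdx d n, evalA A (φ (wrd j)) * (evalA A (φ (wrd j)))ᴴ)
            * (Kmat φ A n)⁻¹ := by
          rw [← Finset.sum_mul, ← Finset.mul_sum]
      _ = (Kmat φ A n)⁻¹ := by
          rw [← hKsum', Matrix.nonsing_inv_mul _ hKdet, one_mul]
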